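/- If α ≤ 1 and P(lim_{|k|→∞} ‖Y_k‖ = 0) = 1, then P(Σ_{j∈ℤ} ‖Θ_j‖ < ∞) = 1. -/

import Mathlib

/-!
Sort the sequences `y` with `‖y₀‖ > 1` whose norms tend to `0` but are not summable by the
index `k` of their first maximal coordinate. Shift invariance of `ν` moves that index to `0`
and turns `‖y₀‖ > 1` into `‖y₋ₖ‖ > 1`, after which the polar decomposition computes the mass
of the `k`-th piece as `E[‖Θ₋ₖ‖^α; Θ ∈ A]`, where `A` is the cone of non-summable sequences
with first maximum at `0`. Summing over `k`, the whole set has mass `E[∑ⱼ ‖Θⱼ‖^α; Θ ∈ A]`.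
On `A` every `‖Θⱼ‖` is at most `‖Θ₀‖`, so for `α ≤ 1` we get
`‖Θⱼ‖^α ≥ ‖Θⱼ‖ ‖Θ₀‖^(α-1)` and the inner sum is infinite. Since the set also has mass at most
`1` (it is the law of `Y` restricted to it), `P(Θ ∈ A) = 0`; hence almost surely `Y`, which
tends to `0` and is nonzero, has a first maximum and summable norms, and so does `Θ`.
-/

open MeasureTheory ProbabilityTheory Set Filter
open scoped ENNReal NNReal Topology

noncomputable section

def backshift {V : Type*} (k : ℤ) (x : ℤ → V) : ℤ → V := fun j => x (j - k)

theorem ENNReal.tsum_rpow_eq_top_of_le {ι : Type*} {f : ι → ℝ≥0∞} {M : ℝ≥0∞} {p : ℝ}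
    (hp : p ≤ 1) (hM : M ≠ ⊤) (hfM : ∀ i, f i ≤ M) (hf : ∑' i, f i = ⊤) :
    ∑' i, f i ^ p = ⊤ := by
  have hle : ∀ i, f i ≤ f i ^ p * M ^ (1 - p) := fun i => by
    rcases eq_or_ne (f i) 0 with h0 | h0
    · simp [h0]
    calc f i = f i ^ p * f i ^ (1 - p) := by
          rw [← ENNReal.rpow_add _ _ h0 ((hfM i).trans_lt hM.lt_top).ne, add_sub_cancel,
            ENNReal.rpow_one]
      _ ≤ f i ^ p * M ^ (1 - p) := by gcongr; exact hfM i
  by_contra h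
  have : ∑' i, f i ≤ (∑' i, f i ^ p) * M ^ (1 - p) :=
    (ENNReal.tsum_le_tsum hle).trans_eq ENNReal.tsum_mul_right
  exact ENNReal.mul_ne_top h (ENNReal.rpow_ne_top_of_nonneg (by linarith) hM)
    (top_le_iff.mp (hf ▸ this))

theorem backshift_zero {V : Type*} : backshift 0 = (id : (ℤ → V) → ℤ → V) :=
  funext fun x => funext fun j => by simp [backshift]

theorem backshift_comp_backshift {V : Type*} (a b : ℤ) :
    (backshift a : (ℤ → V) → ℤ → V) ∘ backshift b = backshift (a + b) :=
  funext fun x => funext fun j => by simp [backshift, sub_sub]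

@[fun_prop]
theorem measurable_backshift {V : Type*} [MeasurableSpace V] (k : ℤ) :
    Measurable (backshift k : (ℤ → V) → ℤ → V) :=
  measurable_pi_lambda _ fun j => measurable_pi_apply (j - k)

theorem MeasureTheory.MeasurePreserving.backshift_int {V : Type*} [MeasurableSpace V]
    {ν : Measure (ℤ → V)} (h : MeasurePreserving (backshift 1) ν ν) (m : ℤ) :
    MeasurePreserving (backshift m) ν ν := by
  have hneg : MeasurePreserving (backshift (-1)) ν ν := by
    refine ⟨measurable_backshift _, ?_⟩
    conv_lhs => rw [← h.map_eq]
    rw [Measure.map_map (measurable_backshift _) (measurable_backshift _),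
      backshift_comp_backshift, neg_add_cancel, backshift_zero, Measure.map_id]
  induction m using Int.induction_on with
  | zero => exact backshift_zero ▸ MeasurePreserving.id ν
  | succ n ih =>
    rw [add_comm, ← backshift_comp_backshift]
    exact h.comp ih
  | pred n ih =>
    rw [sub_eq_neg_add, ← backshift_comp_backshift]
    exact hneg.comp ih

section Sequences

variable {V : Type*} [NormedAddCommGroup V]

def firstArgmaxAt (k : ℤ) : Set (ℤ → V) :=
  {y | (∀ j, ‖y j‖ ≤ ‖y k‖) ∧ ∀ i < k, ‖y i‖ < ‖y k‖}

def nonSummableNorm : Set (ℤ → V) := {y | ¬Summable fun j => ‖y j‖}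

theorem backshift_mem_firstArgmaxAt {m k : ℤ} {y : ℤ → V} :
    backshift m y ∈ firstArgmaxAt k ↔ y ∈ firstArgmaxAt (k - m) := by
  simp only [firstArgmaxAt, backshift, mem_ofPred_eq]
  constructor
  · rintro ⟨hmax, hfirst⟩
    exact ⟨fun j => by simpa using hmax (j + m),
      fun i hi => by simpa using hfirst (i + m) (by omega)⟩
  · rintro ⟨hmax, hfirst⟩
    exact ⟨fun j => hmax (j - m), fun i hi => hfirst (i - m) (by omega)⟩

theorem pairwise_disjoint_firstArgmaxAt :
    Pairwise (Function.onFun Disjoint (firstArgmaxAt : ℤ → Set (ℤ → V))) := by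
  intro k l hkl
  refine Set.disjoint_left.mpr fun y hk hl => ?_
  rcases hkl.lt_or_gt with h | h
  · exact (hl.2 k h).not_ge (hk.1 l)
  · exact (hk.2 l h).not_ge (hl.1 k)

theorem norm_pos_of_mem_firstArgmaxAt {k : ℤ} {y : ℤ → V} (hy : y ∈ firstArgmaxAt k) :
    0 < ‖y k‖ :=
  (norm_nonneg _).trans_lt (hy.2 (k - 1) (by omega))

theorem exists_mem_firstArgmaxAt {y : ℤ → V}
    (hy : Tendsto (fun j => ‖y j‖) cofinite (𝓝 0)) (hy0 : y ≠ 0) :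
    ∃ k, y ∈ firstArgmaxAt k := by
  obtain ⟨j₀, hj₀⟩ := Function.ne_iff.mp hy0
  have hfin : {j | ‖y j₀‖ ≤ ‖y j‖}.Finite := by
    simpa only [not_lt] using
      eventually_cofinite.mp (hy.eventually_lt_const (norm_pos_iff.mpr hj₀))
  -- maximise `(‖y j‖, -j)` lexicographically: the largest norm first, then the smallest index
  obtain ⟨k, hkF, hk⟩ :=
    hfin.toFinset.exists_max_image (fun j => toLex (‖y j‖, -j)) ⟨j₀, by simp⟩
  have hj₀k : ‖y j₀‖ ≤ ‖y k‖ := by simpa using hkF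
  have hdom : ∀ i, ‖y i‖ < ‖y k‖ ∨ ‖y i‖ = ‖y k‖ ∧ k ≤ i := by
    intro i
    by_cases hi : ‖y j₀‖ ≤ ‖y i‖
    · have := Prod.Lex.toLex_le_toLex'.mp (hk i (by simpa using hi))
      rcases this.1.lt_or_eq with h | h
      · exact .inl h
      · exact .inr ⟨h, by simpa using this.2 h⟩
    · exact .inl ((not_le.mp hi).trans_le hj₀k)
  refine ⟨k, fun j => ?_, fun i hi => ?_⟩
  · rcases hdom j with h | h
    exacts [h.le, h.1.le]
  · exact (hdom i).resolve_right fun h => h.2.not_gt hi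

theorem backshift_mem_nonSummableNorm {m : ℤ} {y : ℤ → V} :
    backshift m y ∈ nonSummableNorm ↔ y ∈ nonSummableNorm :=
  not_congr ((Equiv.subRight m).summable_iff (f := fun j => ‖y j‖))

theorem tsum_enorm_rpow_eq_top {p : ℝ} (hp : p ≤ 1) {k : ℤ} {y : ℤ → V}
    (hy : y ∈ firstArgmaxAt k ∩ nonSummableNorm) : ∑' j, ‖y j‖ₑ ^ p = ⊤ :=
  ENNReal.tsum_rpow_eq_top_of_le hp enorm_ne_top (fun j => enorm_le_iff_norm_le.mpr (hy.1.1 j))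
    (not_not.mp (mt tsum_enorm_ne_top_iff_summable_norm.mp hy.2))

variable [NormedSpace ℝ V]

theorem smul_mem_firstArgmaxAt {c : ℝ} (hc : 0 < c) {k : ℤ} {y : ℤ → V} :
    c • y ∈ firstArgmaxAt k ↔ y ∈ firstArgmaxAt k := by
  simp only [firstArgmaxAt, mem_ofPred_eq, Pi.smul_apply, norm_smul, Real.norm_of_nonneg hc.le,
    mul_le_mul_iff_right₀ hc, mul_lt_mul_iff_right₀ hc]

theorem smul_mem_nonSummableNorm {c : ℝ} (hc : 0 < c) {y : ℤ → V} :
    c • y ∈ nonSummableNorm ↔ y ∈ nonSummableNorm := by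
  simp only [nonSummableNorm, mem_ofPred_eq, Pi.smul_apply, norm_smul,
    summable_mul_left_iff (norm_ne_zero_iff.mpr hc.ne')]

end Sequences

section Measurability

variable {V : Type*} [NormedAddCommGroup V] [MeasurableSpace V] [BorelSpace V]

theorem measurableSet_one_lt_norm_apply (j : ℤ) : MeasurableSet {y : ℤ → V | 1 < ‖y j‖} :=
  measurableSet_lt measurable_const (measurable_pi_apply j).norm

theorem measurableSet_firstArgmaxAt (k : ℤ) : MeasurableSet (firstArgmaxAt k : Set (ℤ → V)) := by
  have hnorm : ∀ j, Measurable fun y : ℤ → V => ‖y j‖ := fun j => (measurable_pi_apply j).norm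
  simp only [firstArgmaxAt, ofPred_and, ofPred_forall]
  exact (MeasurableSet.iInter fun j => measurableSet_le (hnorm j) (hnorm k)).inter
    (MeasurableSet.iInter fun i => MeasurableSet.iInter fun _ =>
      measurableSet_lt (hnorm i) (hnorm k))

theorem measurableSet_nonSummableNorm : MeasurableSet (nonSummableNorm : Set (ℤ → V)) := by
  simp only [nonSummableNorm, ← tsum_enorm_ne_top_iff_summable_norm, not_not]
  exact measurableSet_eq_fun (Measurable.tsum fun j => (measurable_pi_apply j).enorm)
    measurable_const

theorem measurableSet_tendsto_norm_cofinite :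
    MeasurableSet {y : ℤ → V | Tendsto (fun j => ‖y j‖) cofinite (𝓝 0)} := by
  simp only [Int.cofinite_eq, tendsto_sup, ofPred_and]
  exact (measurableSet_tendsto _ fun j => (measurable_pi_apply j).norm).inter
    (measurableSet_tendsto _ fun j => (measurable_pi_apply j).norm)

end Measurability

theorem lintegral_pareto_density_one_lt_mul {α c : ℝ} (hα : 0 < α) (hc : 0 ≤ c) :
    ∫⁻ r in {r | 1 < r * c}, ENNReal.ofReal (α * r ^ (-α - 1)) = ENNReal.ofReal c ^ α := by
  rcases hc.eq_or_lt with rfl | hc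
  · norm_num [ENNReal.zero_rpow_of_pos hα]
  have hset : {r : ℝ | 1 < r * c} = Ioi c⁻¹ := by
    ext r
    simp only [mem_ofPred_eq, mem_Ioi, inv_lt_iff_one_lt_mul₀ hc]
  have hexp : -α - 1 < -1 := by linarith
  have hc' : 0 < c⁻¹ := inv_pos.mpr hc
  rw [hset, ← ofReal_integral_eq_lintegral_ofReal
    ((integrableOn_Ioi_rpow_of_lt hexp hc').const_mul α)]
  · rw [integral_const_mul, integral_Ioi_rpow_of_lt hexp hc', sub_add_cancel,
      ENNReal.ofReal_rpow_of_nonneg hc.le hα.le, Real.inv_rpow hc.le, Real.rpow_neg hc.le]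
    field_simp
  · filter_upwards [ae_restrict_mem measurableSet_Ioi] with r (hr : c⁻¹ < r)
    have := hc'.trans hr
    positivity

section Polar

variable {V Ω : Type*} [NormedAddCommGroup V] [NormedSpace ℝ V] [MeasurableSpace V]
  [MeasurableSpace Ω]

def HasPolarDecomposition (ν : Measure (ℤ → V)) (P : Measure Ω) (Θ : Ω → ℤ → V) (α : ℝ) :
    Prop :=
  ∀ H : (ℤ → V) → ℝ≥0∞, Measurable H →
    ∫⁻ y in {y : ℤ → V | y 0 ≠ 0}, H y ∂ν
      = ∫⁻ r in Ioi (0 : ℝ), (∫⁻ ω, H (r • Θ ω) ∂P) * ENNReal.ofReal (α * r ^ (-α - 1))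

variable [BorelSpace V] {ν : Measure (ℤ → V)} {P : Measure Ω} [SFinite P] {Θ : Ω → ℤ → V}
  {α : ℝ}

theorem HasPolarDecomposition.measure_inter_one_lt_norm
    (hpolar : HasPolarDecomposition ν P Θ α) (hα : 0 < α) (hΘ : Measurable Θ)
    {B : Set (ℤ → V)} (hB : MeasurableSet B) (hBcone : ∀ c : ℝ, 0 < c → ∀ y, c • y ∈ B ↔ y ∈ B)
    (hB0 : ∀ y ∈ B, y 0 ≠ 0) (j : ℤ) :
    ν (B ∩ {y | 1 < ‖y j‖}) = ∫⁻ ω in Θ ⁻¹' B, ‖Θ ω j‖ₑ ^ α ∂P := by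
  set dens : ℝ → ℝ≥0∞ := fun r => ENNReal.ofReal (α * r ^ (-α - 1))
  set s := B ∩ {y | 1 < ‖y j‖}
  have hs : MeasurableSet s := hB.inter (measurableSet_one_lt_norm_apply j)
  set E := {p : ℝ × Ω | Θ p.2 ∈ B ∧ 1 < p.1 * ‖Θ p.2 j‖}
  have hE : MeasurableSet E := (measurable_snd (hΘ hB)).inter
    (measurableSet_lt measurable_const
      (measurable_fst.mul ((measurable_pi_apply j).comp (hΘ.comp measurable_snd)).norm))
  have hsmul : ∀ r : ℝ, 0 < r → ∀ ω, r • Θ ω ∈ s ↔ (r, ω) ∈ E := fun r hr ω => by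
    simp only [s, E, mem_inter_iff, mem_ofPred_eq, hBcone r hr, Pi.smul_apply, norm_smul,
      Real.norm_of_nonneg hr.le]
  have hinner : ∀ r ∈ Ioi (0 : ℝ), (∫⁻ ω, s.indicator 1 (r • Θ ω) ∂P) * dens r
      = ∫⁻ ω, E.indicator (fun p => dens p.1) (r, ω) ∂P := fun r (hr : 0 < r) => by
    rw [← lintegral_mul_const' _ _ ENNReal.ofReal_ne_top]
    refine lintegral_congr fun ω => ?_
    by_cases h : (r, ω) ∈ E
    · simp [indicator_of_mem h, indicator_of_mem ((hsmul r hr ω).mpr h), dens]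
    · simp [indicator_of_notMem h, indicator_of_notMem (mt (hsmul r hr ω).mp h)]
  have hradial : ∀ ω, ∫⁻ r in Ioi 0, E.indicator (fun p => dens p.1) (r, ω)
      = (Θ ⁻¹' B).indicator (fun ω => ‖Θ ω j‖ₑ ^ α) ω := fun ω => by
    by_cases hω : Θ ω ∈ B
    · have hEω : ∀ r, E.indicator (fun p => dens p.1) (r, ω)
          = {r | 1 < r * ‖Θ ω j‖}.indicator dens r := fun r => by
        simp only [indicator, E, mem_ofPred_eq, hω, true_and]
      have hsub : {r : ℝ | 1 < r * ‖Θ ω j‖} ⊆ Ioi 0 := fun r hr =>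
        pos_of_mul_pos_left (one_pos.trans hr) (norm_nonneg _)
      have hmeas : MeasurableSet {r : ℝ | 1 < r * ‖Θ ω j‖} :=
        measurableSet_lt measurable_const (measurable_id.mul_const _)
      rw [indicator_of_mem (show ω ∈ Θ ⁻¹' B from hω), ← ofReal_norm]
      simp_rw [hEω]
      rw [lintegral_indicator hmeas, Measure.restrict_restrict hmeas,
        inter_eq_self_of_subset_left hsub, lintegral_pareto_density_one_lt_mul hα (norm_nonneg _)]
    · simp [indicator, E, hω]
  calc ν s = ∫⁻ y in {y : ℤ → V | y 0 ≠ 0}, s.indicator 1 y ∂ν := by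
        rw [lintegral_indicator_one hs, Measure.restrict_apply hs,
          inter_eq_left.mpr (show s ⊆ {y | y 0 ≠ 0} from fun y hy => hB0 y hy.1)]
    _ = ∫⁻ r in Ioi 0, (∫⁻ ω, s.indicator 1 (r • Θ ω) ∂P) * dens r :=
        hpolar _ (measurable_one.indicator hs)
    _ = ∫⁻ r in Ioi 0, ∫⁻ ω, E.indicator (fun p => dens p.1) (r, ω) ∂P :=
        setLIntegral_congr_fun measurableSet_Ioi hinner
    _ = ∫⁻ ω, (∫⁻ r in Ioi 0, E.indicator (fun p => dens p.1) (r, ω)) ∂P :=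
        lintegral_lintegral_swap
          ((Measurable.indicator (by fun_prop : Measurable fun p : ℝ × Ω => dens p.1)
            hE).aemeasurable)
    _ = ∫⁻ ω in Θ ⁻¹' B, ‖Θ ω j‖ₑ ^ α ∂P := by
        rw [lintegral_congr hradial, lintegral_indicator (hΘ hB)]

theorem HasPolarDecomposition.measure_iUnion_firstArgmaxAt_inter
    (hpolar : HasPolarDecomposition ν P Θ α) (hα : 0 < α) (hΘ : Measurable Θ)
    (hν : MeasurePreserving (backshift 1) ν ν) {B : Set (ℤ → V)} (hB : MeasurableSet B)
    (hBshift : ∀ m y, backshift m y ∈ B ↔ y ∈ B)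
    (hBcone : ∀ c : ℝ, 0 < c → ∀ y, c • y ∈ B ↔ y ∈ B) :
    ν ((⋃ k, firstArgmaxAt k) ∩ B ∩ {y | 1 < ‖y 0‖})
      = ∫⁻ ω in Θ ⁻¹' (firstArgmaxAt 0 ∩ B), ∑' j, ‖Θ ω j‖ₑ ^ α ∂P := by
  have hmeas : ∀ k, MeasurableSet (firstArgmaxAt k ∩ B ∩ {y : ℤ → V | 1 < ‖y 0‖}) := fun k =>
    ((measurableSet_firstArgmaxAt k).inter hB).inter (measurableSet_one_lt_norm_apply 0)
  have hshift : ∀ k, firstArgmaxAt k ∩ B ∩ {y : ℤ → V | 1 < ‖y 0‖}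
      = backshift (-k) ⁻¹' (firstArgmaxAt 0 ∩ B ∩ {y | 1 < ‖y (-k)‖}) := fun k => by
    ext y
    simp [backshift_mem_firstArgmaxAt, hBshift, backshift]
  have hpiece : ∀ k, ν (firstArgmaxAt 0 ∩ B ∩ {y | 1 < ‖y (-k)‖})
      = ∫⁻ ω in Θ ⁻¹' (firstArgmaxAt 0 ∩ B), ‖Θ ω (-k)‖ₑ ^ α ∂P := fun k =>
    hpolar.measure_inter_one_lt_norm hα hΘ ((measurableSet_firstArgmaxAt 0).inter hB)
      (fun c hc y => and_congr (smul_mem_firstArgmaxAt hc) (hBcone c hc y))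
      (fun y hy => norm_pos_iff.mp (norm_pos_of_mem_firstArgmaxAt hy.1)) (-k)
  calc ν ((⋃ k, firstArgmaxAt k) ∩ B ∩ {y | 1 < ‖y 0‖})
      = ∑' k, ν (firstArgmaxAt k ∩ B ∩ {y | 1 < ‖y 0‖}) := by
        rw [iUnion_inter, iUnion_inter, measure_iUnion _ hmeas]
        exact fun k l hkl => ((pairwise_disjoint_firstArgmaxAt hkl).mono inter_subset_left
          inter_subset_left).mono inter_subset_left inter_subset_left
    _ = ∑' k, ∫⁻ ω in Θ ⁻¹' (firstArgmaxAt 0 ∩ B), ‖Θ ω (-k)‖ₑ ^ α ∂P := by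
        refine tsum_congr fun k => ?_
        rw [hshift, (hν.backshift_int (-k)).measure_preimage, hpiece]
        exact (((measurableSet_firstArgmaxAt 0).inter hB).inter
          (measurableSet_one_lt_norm_apply _)).nullMeasurableSet
    _ = ∫⁻ ω in Θ ⁻¹' (firstArgmaxAt 0 ∩ B), ∑' k, ‖Θ ω (-k)‖ₑ ^ α ∂P :=
        (lintegral_tsum fun k => by fun_prop).symm
    _ = ∫⁻ ω in Θ ⁻¹' (firstArgmaxAt 0 ∩ B), ∑' j, ‖Θ ω j‖ₑ ^ α ∂P :=
        lintegral_congr fun ω => (Equiv.neg ℤ).tsum_eq fun j => ‖Θ ω j‖ₑ ^ α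

theorem HasPolarDecomposition.measure_iUnion_firstArgmaxAt_inter_nonSummableNorm
    (hpolar : HasPolarDecomposition ν P Θ α) (hα : 0 < α) (hα1 : α ≤ 1) (hΘ : Measurable Θ)
    (hν : MeasurePreserving (backshift 1) ν ν) :
    ν ((⋃ k, firstArgmaxAt k) ∩ nonSummableNorm ∩ {y | 1 < ‖y 0‖})
      = ⊤ * P (Θ ⁻¹' (firstArgmaxAt 0 ∩ nonSummableNorm)) := by
  rw [hpolar.measure_iUnion_firstArgmaxAt_inter hα hΘ hν measurableSet_nonSummableNorm
      (fun _ _ => backshift_mem_nonSummableNorm) (fun _ hc _ => smul_mem_nonSummableNorm hc),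
    setLIntegral_congr_fun
      (hΘ ((measurableSet_firstArgmaxAt 0).inter measurableSet_nonSummableNorm))
      (fun ω hω => tsum_enorm_rpow_eq_top hα1 hω),
    setLIntegral_const]

end Polar
theorem statement7_general
    -- `V` plays the role of `ℝ^d` (`d ≥ 1`) equipped with an arbitrary norm
    {V : Type*} [NormedAddCommGroup V] [NormedSpace ℝ V]
    [MeasurableSpace V] [BorelSpace V]
    (α : ℝ) (hα : 0 < α)
    -- the tail measure and its properties
    (ν : Measure (ℤ → V))
    (hνshift : ν.map (backshift 1) = ν)
    -- the tail process `Y` and the spectral tail process `Θ`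
    {Ω : Type*} [MeasurableSpace Ω] (P : Measure Ω) [IsProbabilityMeasure P]
    (Y : Ω → ℤ → V) (hYmeas : Measurable Y)
    (hYlaw : P.map Y = ν.restrict {y : ℤ → V | 1 < ‖y 0‖})
    (Θ : Ω → ℤ → V) (hΘdef : ∀ ω, Θ ω = ‖Y ω 0‖⁻¹ • Y ω)
    (hpolar : ∀ H : (ℤ → V) → ℝ≥0∞, Measurable H →
      ∫⁻ y in {y : ℤ → V | y 0 ≠ 0}, H y ∂ν
        = ∫⁻ r in Ioi (0 : ℝ),
            (∫⁻ ω, H (r • Θ ω) ∂P) * ENNReal.ofReal (α * r ^ (-α - 1)))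
    -- the statement
    (hα1 : α ≤ 1)
    (hY0 : P {ω | Tendsto (fun k : ℤ => ‖Y ω k‖) cofinite (𝓝 0)} = 1) :
    P {ω | Summable fun j : ℤ => ‖Θ ω j‖} = 1 := by
  have hΘ : Measurable Θ := by
    rw [funext hΘdef]
    exact measurable_pi_lambda _ fun j =>
      ((measurable_pi_apply 0).comp hYmeas).norm.inv.smul ((measurable_pi_apply j).comp hYmeas)
  set X : Set (ℤ → V) := (⋃ k, firstArgmaxAt k) ∩ nonSummableNorm
  have hX : MeasurableSet X :=
    (MeasurableSet.iUnion measurableSet_firstArgmaxAt).inter measurableSet_nonSummableNorm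
  have hlaw : P (Y ⁻¹' X) = ν (X ∩ {y | 1 < ‖y 0‖}) := by
    rw [← Measure.map_apply hYmeas hX, hYlaw, Measure.restrict_apply hX]
  have hYX : P (Y ⁻¹' X) = 0 := by
    have hcluster := HasPolarDecomposition.measure_iUnion_firstArgmaxAt_inter_nonSummableNorm
      hpolar hα hα1 hΘ ⟨measurable_backshift 1, hνshift⟩
    have hfin : ⊤ * P (Θ ⁻¹' (firstArgmaxAt 0 ∩ nonSummableNorm)) ≠ ⊤ :=
      hcluster ▸ hlaw ▸ measure_ne_top P _
    have hT : P (Θ ⁻¹' (firstArgmaxAt 0 ∩ nonSummableNorm)) = 0 := by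
      simpa [ENNReal.mul_eq_top] using hfin
    rw [hlaw, hcluster, hT, mul_zero]
  have hS : ∀ᵐ ω ∂P, 1 < ‖Y ω 0‖ :=
    ae_of_ae_map hYmeas.aemeasurable (hYlaw ▸ ae_restrict_mem (measurableSet_one_lt_norm_apply 0))
  have hvanish : ∀ᵐ ω ∂P, Tendsto (fun k : ℤ => ‖Y ω k‖) cofinite (𝓝 0) :=
    (ae_iff_measure_eq (hYmeas measurableSet_tendsto_norm_cofinite).nullMeasurableSet).mpr
      (hY0.trans measure_univ.symm)
  have hsummable : ∀ᵐ ω ∂P, Summable fun j : ℤ => ‖Θ ω j‖ := by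
    filter_upwards [hS, hvanish, measure_eq_zero_iff_ae_notMem.mp hYX] with ω hS hvanish hnotX
    have hY0ne : Y ω ≠ 0 := fun h => by norm_num [h] at hS
    obtain ⟨k, hk⟩ := exists_mem_firstArgmaxAt hvanish hY0ne
    have : Y ω ∉ nonSummableNorm := fun h => hnotX ⟨mem_iUnion.mpr ⟨k, hk⟩, h⟩
    rw [hΘdef]
    exact not_not.mp ((smul_mem_nonSummableNorm (inv_pos.mpr (by linarith))).not.mpr this)
  exact (measure_congr (ae_eq_univ.mpr (ae_iff.mp hsummable))).trans measure_univ

/-- **Summability of the spectral tail process when `α ≤ 1`.**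
If `α ≤ 1` and `P(lim_{|k|→∞} ‖Y_k‖ = 0) = 1`, then `P(Σ_{j∈ℤ} ‖Θ_j‖ < ∞) = 1`. -/
theorem statement7
    -- `V` plays the role of `ℝ^d` (`d ≥ 1`) equipped with an arbitrary norm
    {V : Type*} [NormedAddCommGroup V] [NormedSpace ℝ V] [FiniteDimensional ℝ V]
    [Nontrivial V] [MeasurableSpace V] [BorelSpace V]
    (α : ℝ) (hα : 0 < α)
    -- the tail measure and its properties
    (ν : Measure (ℤ → V))
    (hν0 : ν {0} = 0)
    (hν1 : ν {y : ℤ → V | 1 < ‖y 0‖} = 1)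
    (hνshift : ν.map (backshift 1) = ν)
    (hνhom : ∀ A : Set (ℤ → V), MeasurableSet A → ∀ c : ℝ, 0 < c →
      ν ((fun x => c • x) '' A) = ENNReal.ofReal (c ^ (-α)) * ν A)
    -- the tail process `Y` and the spectral tail process `Θ`
    {Ω : Type*} [MeasurableSpace Ω] (P : Measure Ω) [IsProbabilityMeasure P]
    (Y : Ω → ℤ → V) (hYmeas : Measurable Y)
    (hYlaw : P.map Y = ν.restrict {y : ℤ → V | 1 < ‖y 0‖})
    (Θ : Ω → ℤ → V) (hΘdef : ∀ ω, Θ ω = ‖Y ω 0‖⁻¹ • Y ω)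
    (hPareto : ∀ u : ℝ, 1 ≤ u → P {ω | u < ‖Y ω 0‖} = ENNReal.ofReal (u ^ (-α)))
    (hindep : IndepFun (fun ω => ‖Y ω 0‖) Θ P)
    (hpolar : ∀ H : (ℤ → V) → ℝ≥0∞, Measurable H →
      ∫⁻ y in {y : ℤ → V | y 0 ≠ 0}, H y ∂ν
        = ∫⁻ r in Ioi (0 : ℝ),
            (∫⁻ ω, H (r • Θ ω) ∂P) * ENNReal.ofReal (α * r ^ (-α - 1)))
    -- the statement
    (hα1 : α ≤ 1)
    (hY0 : P {ω | Tendsto (fun k : ℤ => ‖Y ω k‖) cofinite (𝓝 0)} = 1) :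
    P {ω | Summable fun j : ℤ => ‖Θ ω j‖} = 1 :=
  statement7_general α hα ν hνshift P Y hYmeas hYlaw Θ hΘdef hpolar hα1 hY0
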